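/- arXiv:1207.2462 — 6 statements merged into one kernel-verified Lean document; each statement's English description precedes it below -/
import Mathlib

section
/- Let p₁ ≤_B p₂ ≤_B p₃ and let a ∈ A \ B. If q₁ →a p₁, q₁ →a p₂, and q₂ →a p₂, and furthermore q₁ and q₂ have exactly these a-successors among {p₁,p₂} (i.e., q₁ and q₂ are otherwise identical: their transitions and termination options coincide apart from these a-transitions), then q₁ ≃_B q₂. In particular, adding a transition to a little brother p₁ of p₂ to a state already having an a-transition to p₂ does not change its partial bisimilarity class. -/
variable {S A : Type*}

/-- R is a partial bisimulation w.r.t. the bisimulation action set B. -/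
def IsPB (tm : S → Prop) (tr : S → A → S → Prop) (B : Set A)
    (R : S → S → Prop) : Prop :=
  ∀ p q, R p q →
    (tm p → tm q) ∧
    (∀ a p', tr p a p' → ∃ q', tr q a q' ∧ R p' q') ∧
    (∀ b q', b ∈ B → tr q b q' → ∃ p', tr p b p' ∧ R p' q')

/-- The partial bisimilarity preorder ≤_B. -/
def PbLe (tm : S → Prop) (tr : S → A → S → Prop) (B : Set A) (p q : S) : Prop :=
  ∃ R, IsPB tm tr B R ∧ R p q

/-- R is a simulation. -/
def IsSim (tm : S → Prop) (tr : S → A → S → Prop) (R : S → S → Prop) : Prop :=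
  ∀ p q, R p q →
    (tm p → tm q) ∧
    (∀ a p', tr p a p' → ∃ q', tr q a q' ∧ R p' q')

/-- Strong similarity preorder. -/
def SimLe (tm : S → Prop) (tr : S → A → S → Prop) (p q : S) : Prop :=
  ∃ R, IsSim tm tr R ∧ R p q

/-- R is a bisimulation: R and its inverse are simulations. -/
def IsBisim (tm : S → Prop) (tr : S → A → S → Prop) (R : S → S → Prop) : Prop :=
  IsSim tm tr R ∧ IsSim tm tr (fun p q => R q p)

/-- Strong bisimilarity. -/
def Bisimilar (tm : S → Prop) (tr : S → A → S → Prop) (p q : S) : Prop :=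
  ∃ R, IsBisim tm tr R ∧ R p q

/-- A strong bisimulation: a symmetric relation matching termination and transitions. -/
def IsStrongBisim (tm : S → Prop) (tr : S → A → S → Prop) (R : S → S → Prop) : Prop :=
  Symmetric R ∧ ∀ p q, R p q →
    (tm p ↔ tm q) ∧
    (∀ a p', tr p a p' → ∃ q', tr q a q' ∧ R p' q')

/-- P is a partition of S: nonempty, covering, pairwise-disjoint classes. -/
def IsPartition' (P : Set (Set S)) : Prop :=
  (∀ Q ∈ P, Q.Nonempty) ∧ (∀ s : S, ∃ Q ∈ P, s ∈ Q) ∧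
  (∀ Q ∈ P, ∀ R ∈ P, (Q ∩ R).Nonempty → Q = R)

/-- Partition-relation pair: a partition with a partial order on its classes. -/
def IsPRP (P : Set (Set S)) (le : Set S → Set S → Prop) : Prop :=
  IsPartition' P ∧
  (∀ Q R, le Q R → Q ∈ P ∧ R ∈ P) ∧
  (∀ Q ∈ P, le Q Q) ∧
  (∀ Q R, le Q R → le R Q → Q = R) ∧
  (∀ Q R T, le Q R → le R T → le Q T)

/-- Every state of P has an a-transition into X. -/
def AllTr (tr : S → A → S → Prop) (a : A) (P X : Set S) : Prop :=
  ∀ p ∈ P, ∃ x ∈ X, tr p a x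

/-- Some state of P has an a-transition into X. -/
def ExTr (tr : S → A → S → Prop) (a : A) (P X : Set S) : Prop :=
  ∃ p ∈ P, ∃ x ∈ X, tr p a x

/-- bb(R): union of all big brother classes of R. -/
def bigBro (P : Set (Set S)) (le : Set S → Set S → Prop) (R : Set S) : Set S :=
  {x | ∃ Q ∈ P, le R Q ∧ x ∈ Q}

/-- lb(R): union of all little brother classes of R. -/
def litBro (P : Set (Set S)) (le : Set S → Set S → Prop) (R : Set S) : Set S :=
  {x | ∃ Q ∈ P, le Q R ∧ x ∈ Q}

/-- Stability of a partition-relation pair (Definition of stability conditions a-d). -/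
def IsStable (tm : S → Prop) (tr : S → A → S → Prop) (B : Set A)
    (P : Set (Set S)) (le : Set S → Set S → Prop) : Prop :=
  (∀ Q ∈ P, (∀ q ∈ Q, tm q) ∨ (∀ q ∈ Q, ¬ tm q)) ∧
  (∀ Q R, le Q R → (∀ q ∈ Q, tm q) → (∀ r ∈ R, tm r)) ∧
  (∀ Q Q' R, R ∈ P → le Q Q' → ∀ a, ExTr tr a Q R → AllTr tr a Q' (bigBro P le R)) ∧
  (∀ Q Q' R, R ∈ P → le Q Q' → ∀ b ∈ B, ExTr tr b Q' R → AllTr tr b Q (litBro P le R))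

/-- The order ◁ on partition-relation pairs. -/
def Lhd (P₁ : Set (Set S)) (le₁ : Set S → Set S → Prop)
    (P₂ : Set (Set S)) (le₂ : Set S → Set S → Prop) : Prop :=
  ∀ Q R, le₁ Q R → ∃ Q' ∈ P₂, ∃ R' ∈ P₂, Q ⊆ Q' ∧ R ⊆ R' ∧ le₂ Q' R'

/-- The relation on states induced by a partition-relation pair. -/
def IndRel (P : Set (Set S)) (le : Set S → Set S → Prop) (p q : S) : Prop :=
  ∃ Q ∈ P, ∃ R ∈ P, le Q R ∧ p ∈ Q ∧ q ∈ R

/-- Equivalence classes of the equivalence kernel R ∩ R⁻¹ of a preorder R. -/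
def eqClasses (R : S → S → Prop) : Set (Set S) :=
  {C | ∃ p, C = {q | R p q ∧ R q p}}

/-- The class order induced by a preorder R on its equivalence classes. -/
def classLe (R : S → S → Prop) (Q T : Set S) : Prop :=
  Q ∈ eqClasses R ∧ T ∈ eqClasses R ∧ ∃ p ∈ Q, ∃ q ∈ T, R p q

/-- The little brother relation ≤' induced on a parent partition P'. -/
def IndLe (le : Set S → Set S → Prop) (P' : Set (Set S)) (Q' R' : Set S) : Prop :=
  Q' ∈ P' ∧ R' ∈ P' ∧ ∃ Q R, le Q R ∧ Q ⊆ Q' ∧ R ⊆ R'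

/-- bb'(R') with respect to a parent partition. -/
def bigBro' (le : Set S → Set S → Prop) (P' : Set (Set S)) (R' : Set S) : Set S :=
  {x | ∃ Q' ∈ P', IndLe le P' R' Q' ∧ x ∈ Q'}

/-- lb'(R') with respect to a parent partition. -/
def litBro' (le : Set S → Set S → Prop) (P' : Set (Set S)) (R' : Set S) : Set S :=
  {x | ∃ Q' ∈ P', IndLe le P' Q' R' ∧ x ∈ Q'}

/-- Stability conditions 1-4 of (P, le) with respect to a parent partition P'. -/
def StableWrt (tm : S → Prop) (tr : S → A → S → Prop) (B : Set A)
    (P : Set (Set S)) (le : Set S → Set S → Prop) (P' : Set (Set S)) : Prop :=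
  (∀ Q ∈ P, ∀ a, ∀ R' ∈ P', ExTr tr a Q R' → AllTr tr a Q (bigBro' le P' R')) ∧
  (∀ Q ∈ P, ∀ b ∈ B, ∀ R' ∈ P', ExTr tr b Q R' → AllTr tr b Q (litBro' le P' R')) ∧
  (∀ Q T, le Q T → ∀ a, ∀ R' ∈ P', AllTr tr a Q R' → AllTr tr a T (bigBro' le P' R')) ∧
  (∀ Q T, le Q T → ∀ b ∈ B, ∀ R' ∈ P', AllTr tr b T R' → AllTr tr b Q (litBro' le P' R'))

/-- P' is a parent partition of P. -/
def IsParent (P P' : Set (Set S)) : Prop :=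
  IsPartition' P' ∧ ∀ Q ∈ P, ∃ Q' ∈ P', Q ⊆ Q'

/-- The partition obtained by splitting the class P₀ of P' into S' and P₀ \ S'. -/
def splitPart (P' : Set (Set S)) (P₀ Sp : Set S) : Set (Set S) :=
  (P' \ {P₀}) ∪ {Sp, P₀ \ Sp}

/-- Some le-related pair of classes lies inside (X, Y). -/
def relBetween (le : Set S → Set S → Prop) (X Y : Set S) : Prop :=
  ∃ Q R, le Q R ∧ Q ⊆ X ∧ R ⊆ Y

/-- Sp is a splitter of the class P₀ of the parent partition P' with respect to P. -/
def IsSplitter (P : Set (Set S)) (le : Set S → Set S → Prop)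
    (P' : Set (Set S)) (P₀ Sp : Set S) : Prop :=
  P₀ ∈ P' ∧ Sp ⊆ P₀ ∧ Sp.Nonempty ∧ (P₀ \ Sp).Nonempty ∧
  (∀ Q ∈ P, Q ⊆ Sp ∨ Q ∩ Sp = ∅) ∧
  (relBetween le Sp (P₀ \ Sp) ∨
    (¬ relBetween le Sp (P₀ \ Sp) ∧ ¬ relBetween le (P₀ \ Sp) Sp))

/-- (Pr, ler) is the result Refine(P, le, P', Sp): the ◁-coarsest pair ◁-below (P, le)
stable with respect to the split parent partition. -/
def IsRefineOf (tm : S → Prop) (tr : S → A → S → Prop) (B : Set A)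
    (P : Set (Set S)) (le : Set S → Set S → Prop)
    (P' : Set (Set S)) (P₀ Sp : Set S)
    (Pr : Set (Set S)) (ler : Set S → Set S → Prop) : Prop :=
  IsPRP Pr ler ∧ Lhd Pr ler P le ∧
  StableWrt tm tr B Pr ler (splitPart P' P₀ Sp) ∧
  ∀ Q lq, IsPRP Q lq → Lhd Q lq P le →
    StableWrt tm tr B Q lq (splitPart P' P₀ Sp) → Lhd Q lq Pr ler

/-!
Drop the transition `q₁ →a p₁`. For `q₁ ≤_B q₂`, the dropped step is matched by `q₂ →a p₂`
because `p₁ ≤_B p₂`; every other step of either state is matched by the identical step of the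
other. For `q₂ ≤_B q₁`, the transitions that `q₂` must answer are those of `q₁` with labels in
`B`, and the dropped one is not among them because `a ∉ B`.
-/

section PartialBisimilarity

variable {tm : S → Prop} {tr : S → A → S → Prop} {B : Set A}

theorem PbLe.refl (p : S) : PbLe tm tr B p p :=
  ⟨Eq, by rintro p _ rfl; exact ⟨id, fun _ p' h => ⟨p', h, rfl⟩, fun _ q' _ h => ⟨q', h, rfl⟩⟩, rfl⟩

theorem isPB_pbLe : IsPB tm tr B (PbLe tm tr B) := by
  rintro p q ⟨R, hR, hpq⟩
  obtain ⟨htm, hfwd, hbwd⟩ := hR p q hpq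
  exact ⟨htm,
    fun c p' h => (hfwd c p' h).imp fun _ ⟨hq', hR'⟩ => ⟨hq', R, hR, hR'⟩,
    fun b q' hb h => (hbwd b q' hb h).imp fun _ ⟨hp', hR'⟩ => ⟨hp', R, hR, hR'⟩⟩

theorem pbLe_of_step {p q : S} (htm : tm p → tm q)
    (hfwd : ∀ c p', tr p c p' → ∃ q', tr q c q' ∧ PbLe tm tr B p' q')
    (hbwd : ∀ b q', b ∈ B → tr q b q' → ∃ p', tr p b p' ∧ PbLe tm tr B p' q') :
    PbLe tm tr B p q := by
  refine ⟨fun x y => PbLe tm tr B x y ∨ (x = p ∧ y = q), ?_, Or.inr ⟨rfl, rfl⟩⟩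
  rintro x y (hxy | ⟨rfl, rfl⟩)
  · obtain ⟨htm', hfwd', hbwd'⟩ := isPB_pbLe x y hxy
    exact ⟨htm', fun c x' h => (hfwd' c x' h).imp fun _ h' => h'.imp_right Or.inl,
      fun b y' hb h => (hbwd' b y' hb h).imp fun _ h' => h'.imp_right Or.inl⟩
  · exact ⟨htm, fun c p' h => (hfwd c p' h).imp fun _ h' => h'.imp_right Or.inl,
      fun b q' hb h => (hbwd b q' hb h).imp fun _ h' => h'.imp_right Or.inl⟩

end PartialBisimilarity

theorem little_brother_nonbisim_general (tm : S → Prop) (tr : S → A → S → Prop) (B : Set A)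
    (a : A) (p₁ p₂ q₁ q₂ : S)
    (ha : a ∉ B)
    (h12 : PbLe tm tr B p₁ p₂)
    (hq2p2 : tr q₂ a p₂)
    (htm : tm q₁ ↔ tm q₂)
    (htr : ∀ c r, tr q₂ c r ↔ (tr q₁ c r ∧ ¬ (c = a ∧ r = p₁))) :
    PbLe tm tr B q₁ q₂ ∧ PbLe tm tr B q₂ q₁ := by
  constructor
  · refine pbLe_of_step htm.mp (fun c r h => ?_)
      fun b r _ h => ⟨r, ((htr b r).mp h).1, PbLe.refl r⟩
    by_cases hdropped : c = a ∧ r = p₁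
    · obtain ⟨rfl, rfl⟩ := hdropped
      exact ⟨p₂, hq2p2, h12⟩
    · exact ⟨r, (htr c r).mpr ⟨h, hdropped⟩, PbLe.refl r⟩
  · refine pbLe_of_step htm.mpr (fun c r h => ⟨r, ((htr c r).mp h).1, PbLe.refl r⟩)
      fun b r hb h => ⟨r, (htr b r).mpr ⟨h, ?_⟩, PbLe.refl r⟩
    rintro ⟨rfl, -⟩
    exact ha hb

/-- removing a transition to a little brother p₁ of p₂ over a
non-bisimulated action a ∉ B preserves the partial bisimilarity class. -/
theorem little_brother_nonbisim (tm : S → Prop) (tr : S → A → S → Prop) (B : Set A)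
    (a : A) (p₁ p₂ q₁ q₂ : S)
    (ha : a ∉ B)
    (h12 : PbLe tm tr B p₁ p₂)
    (hq1p1 : tr q₁ a p₁) (hq1p2 : tr q₁ a p₂) (hq2p2 : tr q₂ a p₂)
    (htm : tm q₁ ↔ tm q₂)
    (htr : ∀ c r, tr q₂ c r ↔ (tr q₁ c r ∧ ¬ (c = a ∧ r = p₁))) :
    PbLe tm tr B q₁ q₂ ∧ PbLe tm tr B q₂ q₁ :=
  little_brother_nonbisim_general tm tr B a p₁ p₂ q₁ q₂ ha h12 hq2p2 htm htr
end

section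
/- Every stable partition-relation pair induces a partial bisimulation preorder: if (P, ≤) is a stable partition-relation pair over G with respect to B, then the relation R = {(p,q) | p ∈ P, q ∈ Q for some classes P, Q ∈ P with P ≤ Q} is a partial bisimulation preorder with respect to B. -/
variable {S A : Type*}

namespace IndRel

variable {tm : S → Prop} {tr : S → A → S → Prop} {B : Set A}
  {P : Set (Set S)} {le : Set S → Set S → Prop}

theorem reflexive (hcov : ∀ s : S, ∃ Q ∈ P, s ∈ Q) (hrefl : ∀ Q ∈ P, le Q Q) :
    Reflexive (IndRel P le) := fun p =>
  let ⟨Q, hQ, hp⟩ := hcov p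
  ⟨Q, hQ, Q, hQ, hrefl Q hQ, hp, hp⟩

theorem transitive (hdisj : ∀ Q ∈ P, ∀ R ∈ P, (Q ∩ R).Nonempty → Q = R)
    (htrans : ∀ Q R T, le Q R → le R T → le Q T) : Transitive (IndRel P le) := by
  rintro p q r ⟨Q, hQ, R, hR, hQR, hp, hq⟩ ⟨R', hR', T, hT, hR'T, hq', hr⟩
  obtain rfl := hdisj R hR R' hR' ⟨q, hq, hq'⟩
  exact ⟨Q, hQ, T, hT, htrans Q R T hQR hR'T, hp, hr⟩

theorem of_mem_bigBro {R : Set S} {r x : S} (hR : R ∈ P) (hr : r ∈ R)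
    (hx : x ∈ bigBro P le R) : IndRel P le r x :=
  let ⟨Q, hQ, hRQ, hxQ⟩ := hx
  ⟨R, hR, Q, hQ, hRQ, hr, hxQ⟩

theorem of_mem_litBro {R : Set S} {r x : S} (hR : R ∈ P) (hr : r ∈ R)
    (hx : x ∈ litBro P le R) : IndRel P le x r :=
  let ⟨Q, hQ, hQR, hxQ⟩ := hx
  ⟨Q, hQ, R, hR, hQR, hxQ, hr⟩

theorem imp_tm (hterm : ∀ Q ∈ P, (∀ q ∈ Q, tm q) ∨ (∀ q ∈ Q, ¬ tm q))
    (hup : ∀ Q R, le Q R → (∀ q ∈ Q, tm q) → ∀ r ∈ R, tm r)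
    {p q : S} (h : IndRel P le p q) (hp : tm p) : tm q := by
  obtain ⟨Q, hQ, R, -, hQR, hpQ, hqR⟩ := h
  rcases hterm Q hQ with hQtm | hQntm
  · exact hup Q R hQR hQtm q hqR
  · exact absurd hp (hQntm p hpQ)

theorem exists_tr_right_of_tr_left (hcov : ∀ s : S, ∃ Q ∈ P, s ∈ Q)
    (hfwd : ∀ Q Q' R, R ∈ P → le Q Q' → ∀ a, ExTr tr a Q R → AllTr tr a Q' (bigBro P le R))
    {p q p' : S} {a : A} (h : IndRel P le p q) (hp : tr p a p') :
    ∃ q', tr q a q' ∧ IndRel P le p' q' := by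
  obtain ⟨Q, -, Q', -, hQQ', hpQ, hqQ'⟩ := h
  obtain ⟨R, hR, hp'R⟩ := hcov p'
  obtain ⟨q', hq', hq⟩ := hfwd Q Q' R hR hQQ' a ⟨p, hpQ, p', hp'R, hp⟩ q hqQ'
  exact ⟨q', hq, of_mem_bigBro hR hp'R hq'⟩

theorem exists_tr_left_of_tr_right (hcov : ∀ s : S, ∃ Q ∈ P, s ∈ Q)
    (hbwd : ∀ Q Q' R, R ∈ P → le Q Q' → ∀ b ∈ B, ExTr tr b Q' R → AllTr tr b Q (litBro P le R))
    {p q q' : S} {b : A} (hb : b ∈ B) (h : IndRel P le p q) (hq : tr q b q') :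
    ∃ p', tr p b p' ∧ IndRel P le p' q' := by
  obtain ⟨Q, -, Q', -, hQQ', hpQ, hqQ'⟩ := h
  obtain ⟨R, hR, hq'R⟩ := hcov q'
  obtain ⟨p', hp', hp⟩ := hbwd Q Q' R hR hQQ' b hb ⟨q, hqQ', q', hq'R, hq⟩ p hpQ
  exact ⟨p', hp, of_mem_litBro hR hq'R hp'⟩

theorem isPB (hcov : ∀ s : S, ∃ Q ∈ P, s ∈ Q) (hst : IsStable tm tr B P le) :
    IsPB tm tr B (IndRel P le) := by
  obtain ⟨hterm, hup, hfwd, hbwd⟩ := hst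
  exact fun _ _ h =>
    ⟨h.imp_tm hterm hup, fun _ _ => h.exists_tr_right_of_tr_left hcov hfwd,
      fun _ _ hb => h.exists_tr_left_of_tr_right hcov hbwd hb⟩

end IndRel

/-- a stable partition-relation pair induces a partial bisimulation
preorder. -/
theorem stable_induces_pb (tm : S → Prop) (tr : S → A → S → Prop) (B : Set A)
    (P : Set (Set S)) (le : Set S → Set S → Prop)
    (hprp : IsPRP P le) (hst : IsStable tm tr B P le) :
    IsPB tm tr B (IndRel P le) ∧ Reflexive (IndRel P le) ∧ Transitive (IndRel P le) := by
  obtain ⟨⟨-, hcov, hdisj⟩, -, hrefl, -, htrans⟩ := hprp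
  exact ⟨IndRel.isPB hcov hst, IndRel.reflexive hcov hrefl, IndRel.transitive hdisj htrans⟩
end

section
/- Every partial bisimulation preorder induces a stable partition-relation pair: if R is a partial bisimulation preorder over S with respect to B, ≃ = R ∩ R⁻¹, P = S/≃ the quotient partition, and ≤ defined on classes by [p] ≤ [q] iff (p,q) ∈ R, then (P, ≤) is a well-defined stable partition-relation pair. -/
variable {S A : Type*}

/-! Since `R` is transitive, two classes related by one pair of representatives are related
by all of them (`classLe.rel`). Stability conditions (c) and (d) are then the transfer clauses
of the partial bisimulation `R`, applied to the given transition and an arbitrary representative,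
and the matching target state lies in its own class, a big (resp. little) brother of the class
of the given target. -/

section Preorder

variable {R : S → S → Prop}

def eqClass (R : S → S → Prop) (p : S) : Set S := {q | R p q ∧ R q p}

theorem eqClass_mem_eqClasses (R : S → S → Prop) (p : S) : eqClass R p ∈ eqClasses R :=
  ⟨p, rfl⟩

theorem mem_eqClass_self (hrefl : Reflexive R) (p : S) : p ∈ eqClass R p :=
  ⟨hrefl p, hrefl p⟩

theorem eqClass_eq_of_rel (htrans : Transitive R) {x y : S} (hxy : R x y) (hyx : R y x) :
    eqClass R x = eqClass R y := by
  ext w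
  exact ⟨fun ⟨hxw, hwx⟩ => ⟨htrans hyx hxw, htrans hwx hxy⟩,
    fun ⟨hyw, hwy⟩ => ⟨htrans hxy hyw, htrans hwy hyx⟩⟩

theorem rel_of_mem_eqClasses (htrans : Transitive R) {C : Set S} (hC : C ∈ eqClasses R)
    {p q : S} (hp : p ∈ C) (hq : q ∈ C) : R p q := by
  obtain ⟨x, rfl⟩ := hC
  exact htrans hp.2 hq.1

theorem classLe.rel (htrans : Transitive R) {Q T : Set S} (hQT : classLe R Q T)
    {p q : S} (hp : p ∈ Q) (hq : q ∈ T) : R p q := by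
  obtain ⟨hQ, hT, p₀, hp₀, q₀, hq₀, h⟩ := hQT
  exact htrans (rel_of_mem_eqClasses htrans hQ hp hp₀)
    (htrans h (rel_of_mem_eqClasses htrans hT hq₀ hq))

theorem classLe_eqClass_of_rel (hrefl : Reflexive R) {p q : S} (h : R p q) :
    classLe R (eqClass R p) (eqClass R q) :=
  ⟨eqClass_mem_eqClasses R p, eqClass_mem_eqClasses R q,
    p, mem_eqClass_self hrefl p, q, mem_eqClass_self hrefl q, h⟩

theorem isPartition'_eqClasses (hrefl : Reflexive R) (htrans : Transitive R) :
    IsPartition' (eqClasses R) := by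
  refine ⟨?_, fun s => ⟨eqClass R s, eqClass_mem_eqClasses R s, mem_eqClass_self hrefl s⟩, ?_⟩
  · rintro _ ⟨x, rfl⟩
    exact ⟨x, mem_eqClass_self hrefl x⟩
  · rintro _ ⟨x, rfl⟩ _ ⟨y, rfl⟩ ⟨z, ⟨hxz, hzx⟩, ⟨hyz, hzy⟩⟩
    exact eqClass_eq_of_rel htrans (htrans hxz hzy) (htrans hyz hzx)

theorem isPRP_eqClasses (hrefl : Reflexive R) (htrans : Transitive R) :
    IsPRP (eqClasses R) (classLe R) := by
  refine ⟨isPartition'_eqClasses hrefl htrans, fun Q T hQT => ⟨hQT.1, hQT.2.1⟩, ?_, ?_, ?_⟩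
  · rintro _ ⟨x, rfl⟩
    exact classLe_eqClass_of_rel hrefl (hrefl x)
  · intro Q T hQT hTQ
    obtain ⟨x, rfl⟩ := hQT.1
    obtain ⟨y, rfl⟩ := hQT.2.1
    exact eqClass_eq_of_rel htrans (hQT.rel htrans (mem_eqClass_self hrefl x)
      (mem_eqClass_self hrefl y)) (hTQ.rel htrans (mem_eqClass_self hrefl y)
      (mem_eqClass_self hrefl x))
  · rintro Q T U ⟨hQ, hT, p, hp, q, hq, hpq⟩ ⟨-, hU, q', hq', u, hu, hq'u⟩
    exact ⟨hQ, hU, p, hp, u, hu, htrans hpq (htrans (rel_of_mem_eqClasses htrans hT hq hq') hq'u)⟩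

theorem mem_bigBro_of_rel (hrefl : Reflexive R) {C : Set S} (hC : C ∈ eqClasses R)
    {r s : S} (hr : r ∈ C) (hrs : R r s) : s ∈ bigBro (eqClasses R) (classLe R) C :=
  ⟨eqClass R s, eqClass_mem_eqClasses R s,
    ⟨hC, eqClass_mem_eqClasses R s, r, hr, s, mem_eqClass_self hrefl s, hrs⟩,
    mem_eqClass_self hrefl s⟩

theorem mem_litBro_of_rel (hrefl : Reflexive R) {C : Set S} (hC : C ∈ eqClasses R)
    {r s : S} (hr : r ∈ C) (hsr : R s r) : s ∈ litBro (eqClasses R) (classLe R) C :=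
  ⟨eqClass R s, eqClass_mem_eqClasses R s,
    ⟨eqClass_mem_eqClasses R s, hC, s, mem_eqClass_self hrefl s, r, hr, hsr⟩,
    mem_eqClass_self hrefl s⟩

end Preorder

theorem isStable_eqClasses {tm : S → Prop} {tr : S → A → S → Prop} {B : Set A}
    {R : S → S → Prop} (hpb : IsPB tm tr B R) (hrefl : Reflexive R) (htrans : Transitive R) :
    IsStable tm tr B (eqClasses R) (classLe R) := by
  refine ⟨?_, ?_, ?_, ?_⟩
  · rintro _ ⟨x, rfl⟩
    by_cases hx : tm x
    · exact Or.inl fun q hq => (hpb x q hq.1).1 hx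
    · exact Or.inr fun q hq hq_tm => hx ((hpb q x hq.2).1 hq_tm)
  · rintro Q T hQT hQ_tm r hr
    obtain ⟨p, hp, -⟩ := hQT.2.2
    exact (hpb p r (hQT.rel htrans hp hr)).1 (hQ_tm p hp)
  · rintro Q Q' C hC hQQ' a ⟨p, hp, r, hr, hpr⟩ q hq
    obtain ⟨s, hqs, hrs⟩ := (hpb p q (hQQ'.rel htrans hp hq)).2.1 a r hpr
    exact ⟨s, mem_bigBro_of_rel hrefl hC hr hrs, hqs⟩
  · rintro Q Q' C hC hQQ' b hb ⟨q, hq, r, hr, hqr⟩ p hp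
    obtain ⟨s, hps, hsr⟩ := (hpb p q (hQQ'.rel htrans hp hq)).2.2 b r hb hqr
    exact ⟨s, mem_litBro_of_rel hrefl hC hr hsr, hps⟩

/-- a partial bisimulation preorder induces a stable
partition-relation pair via its equivalence classes and class order. -/
theorem pb_induces_stable (tm : S → Prop) (tr : S → A → S → Prop) (B : Set A)
    (R : S → S → Prop)
    (hpb : IsPB tm tr B R) (hrefl : Reflexive R) (htrans : Transitive R) :
    IsPRP (eqClasses R) (classLe R) ∧ IsStable tm tr B (eqClasses R) (classLe R) :=
  ⟨isPRP_eqClasses hrefl htrans, isStable_eqClasses hpb hrefl htrans⟩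
end

section
/- A stable partition-relation pair is a fixed point of the refinement operator: if (P, ≤) is stable, then for every parent partition P' of P with P' ≠ P and every splitter S' of P' with respect to P, the refinement Refine(P, ≤, P', S') equals (P, ≤), i.e., the coarsest partition-relation pair ◁-below (P, ≤) that is stable with respect to the split parent partition P' \ {P₀} ∪ {S', P₀ \ S'} is (P, ≤) itself. -/
variable {S A : Type*}

/-!
Splitting the class P₀ of a parent partition along a union of classes of P yields again a parent
partition of P. Stability of (P, ≤) transfers to every parent partition: a transition into a
parent class R' enters some class R ⊆ R' of P, and the big (little) brothers of R lie inside the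
induced big (little) brothers of R'. So (P, ≤) is stable with respect to the split partition,
and since every pair ◁-below (P, ≤) is trivially ◁-below it, it is the coarsest such pair.
-/

theorem splitPart_mem_iff {P' : Set (Set S)} {P₀ Sp C : Set S} :
    C ∈ splitPart P' P₀ Sp ↔ (C ∈ P' ∧ C ≠ P₀) ∨ C = Sp ∨ C = P₀ \ Sp := by
  simp only [splitPart, Set.mem_union, Set.mem_sdiff, Set.mem_insert_iff, Set.mem_singleton_iff]

theorem IsPartition'.splitPart {P' : Set (Set S)} {P₀ Sp : Set S} (hP' : IsPartition' P')
    (hP₀ : P₀ ∈ P') (hSp : Sp ⊆ P₀) (hne : Sp.Nonempty) (hne' : (P₀ \ Sp).Nonempty) :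
    IsPartition' (splitPart P' P₀ Sp) := by
  obtain ⟨hnonempty, hcover, hdisj⟩ := hP'
  have outside : ∀ C ∈ P', C ≠ P₀ → ∀ x ∈ C, x ∉ P₀ := fun C hC hCP₀ x hxC hxP₀ =>
    hCP₀ (hdisj C hC P₀ hP₀ ⟨x, hxC, hxP₀⟩)
  refine ⟨fun C hC => ?_, fun s => ?_, fun C hC D hD ⟨x, hxC, hxD⟩ => ?_⟩
  · rcases splitPart_mem_iff.1 hC with ⟨hC, -⟩ | rfl | rfl
    exacts [hnonempty C hC, hne, hne']
  · obtain ⟨C, hC, hsC⟩ := hcover s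
    by_cases hCP₀ : C = P₀
    · subst hCP₀
      by_cases hs : s ∈ Sp
      · exact ⟨Sp, splitPart_mem_iff.2 (.inr (.inl rfl)), hs⟩
      · exact ⟨C \ Sp, splitPart_mem_iff.2 (.inr (.inr rfl)), hsC, hs⟩
    · exact ⟨C, splitPart_mem_iff.2 (.inl ⟨hC, hCP₀⟩), hsC⟩
  · rcases splitPart_mem_iff.1 hC with ⟨hC, hCP₀⟩ | rfl | rfl <;>
      rcases splitPart_mem_iff.1 hD with ⟨hD, hDP₀⟩ | rfl | rfl
    all_goals grind

theorem IsParent.splitPart {P P' : Set (Set S)} {le : Set S → Set S → Prop} {P₀ Sp : Set S}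
    (hpar : IsParent P P') (hsp : IsSplitter P le P' P₀ Sp) :
    IsParent P (splitPart P' P₀ Sp) := by
  obtain ⟨hP₀, hSp, hne, hne', hsplit, -⟩ := hsp
  refine ⟨hpar.1.splitPart hP₀ hSp hne hne', fun Q hQ => ?_⟩
  obtain ⟨Q', hQ', hQQ'⟩ := hpar.2 Q hQ
  by_cases hQ'P₀ : Q' = P₀
  · subst hQ'P₀
    rcases hsplit Q hQ with hQSp | hQSp
    · exact ⟨Sp, splitPart_mem_iff.2 (.inr (.inl rfl)), hQSp⟩
    · exact ⟨Q' \ Sp, splitPart_mem_iff.2 (.inr (.inr rfl)),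
        fun x hx => ⟨hQQ' hx, fun hxSp => hQSp.subset ⟨hx, hxSp⟩⟩⟩
  · exact ⟨Q', splitPart_mem_iff.2 (.inl ⟨hQ', hQ'P₀⟩), hQQ'⟩

theorem IsParent.subset_of_inter_nonempty {P P' : Set (Set S)} (hpar : IsParent P P')
    {R R' : Set S} (hR : R ∈ P) (hR' : R' ∈ P') (hRR' : (R ∩ R').Nonempty) : R ⊆ R' := by
  obtain ⟨C, hC, hRC⟩ := hpar.2 R hR
  obtain ⟨x, hxR, hxR'⟩ := hRR'
  rwa [hpar.1.2.2 C hC R' hR' ⟨x, hRC hxR, hxR'⟩] at hRC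

theorem IsParent.bigBro_subset {P P' : Set (Set S)} (hpar : IsParent P P')
    (le : Set S → Set S → Prop) {R R' : Set S} (hR' : R' ∈ P') (hRR' : R ⊆ R') :
    bigBro P le R ⊆ bigBro' le P' R' := by
  rintro x ⟨T, hT, hRT, hxT⟩
  obtain ⟨T', hT', hTT'⟩ := hpar.2 T hT
  exact ⟨T', hT', ⟨hR', hT', R, T, hRT, hRR', hTT'⟩, hTT' hxT⟩

theorem IsParent.litBro_subset {P P' : Set (Set S)} (hpar : IsParent P P')
    (le : Set S → Set S → Prop) {R R' : Set S} (hR' : R' ∈ P') (hRR' : R ⊆ R') :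
    litBro P le R ⊆ litBro' le P' R' := by
  rintro x ⟨T, hT, hTR, hxT⟩
  obtain ⟨T', hT', hTT'⟩ := hpar.2 T hT
  exact ⟨T', hT', ⟨hT', hR', T, R, hTR, hTT', hRR'⟩, hTT' hxT⟩

theorem AllTr.mono {tr : S → A → S → Prop} {a : A} {Q X Y : Set S} (hXY : X ⊆ Y)
    (h : AllTr tr a Q X) : AllTr tr a Q Y := fun p hp =>
  let ⟨x, hx, hpx⟩ := h p hp
  ⟨x, hXY hx, hpx⟩

theorem AllTr.exTr {tr : S → A → S → Prop} {a : A} {Q X : Set S} (hQ : Q.Nonempty)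
    (h : AllTr tr a Q X) : ExTr tr a Q X :=
  let ⟨q, hq⟩ := hQ
  ⟨q, hq, h q hq⟩

theorem IsParent.exists_exTr_class {P P' : Set (Set S)} (hpar : IsParent P P')
    (hP : IsPartition' P) {tr : S → A → S → Prop} {a : A} {Q R' : Set S} (hR' : R' ∈ P')
    (h : ExTr tr a Q R') : ∃ R ∈ P, R ⊆ R' ∧ ExTr tr a Q R := by
  obtain ⟨q, hq, r, hrR', hqr⟩ := h
  obtain ⟨R, hR, hrR⟩ := hP.2.1 r
  exact ⟨R, hR, hpar.subset_of_inter_nonempty hR hR' ⟨r, hrR, hrR'⟩, q, hq, r, hrR, hqr⟩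

theorem IsStable.stableWrt {tm : S → Prop} {tr : S → A → S → Prop} {B : Set A}
    {P P' : Set (Set S)} {le : Set S → Set S → Prop} (hst : IsStable tm tr B P le)
    (hprp : IsPRP P le) (hpar : IsParent P P') : StableWrt tm tr B P le P' := by
  obtain ⟨hP, hdom, hrefl, -, -⟩ := hprp
  obtain ⟨-, -, hbig, hlit⟩ := hst
  refine ⟨fun Q hQ a R' hR' hex => ?_, fun Q hQ b hb R' hR' hex => ?_,
    fun Q T hQT a R' hR' hall => ?_, fun Q T hQT b hb R' hR' hall => ?_⟩
  · obtain ⟨R, hR, hRR', hexR⟩ := hpar.exists_exTr_class hP hR' hex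
    exact (hbig Q Q R hR (hrefl Q hQ) a hexR).mono (hpar.bigBro_subset le hR' hRR')
  · obtain ⟨R, hR, hRR', hexR⟩ := hpar.exists_exTr_class hP hR' hex
    exact (hlit Q Q R hR (hrefl Q hQ) b hb hexR).mono (hpar.litBro_subset le hR' hRR')
  · obtain ⟨R, hR, hRR', hexR⟩ :=
      hpar.exists_exTr_class hP hR' (hall.exTr (hP.1 Q (hdom Q T hQT).1))
    exact (hbig Q T R hR hQT a hexR).mono (hpar.bigBro_subset le hR' hRR')
  · obtain ⟨R, hR, hRR', hexR⟩ :=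
      hpar.exists_exTr_class hP hR' (hall.exTr (hP.1 T (hdom Q T hQT).2))
    exact (hlit Q T R hR hQT b hb hexR).mono (hpar.litBro_subset le hR' hRR')

theorem IsPRP.lhd_self {P : Set (Set S)} {le : Set S → Set S → Prop} (hprp : IsPRP P le) :
    Lhd P le P le := fun Q R hQR =>
  ⟨Q, (hprp.2.1 Q R hQR).1, R, (hprp.2.1 Q R hQR).2, subset_rfl, subset_rfl, hQR⟩

theorem stable_fixed_point_general (tm : S → Prop) (tr : S → A → S → Prop) (B : Set A)
    (P : Set (Set S)) (le : Set S → Set S → Prop)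
    (P' : Set (Set S)) (P₀ Sp : Set S)
    (hprp : IsPRP P le) (hst : IsStable tm tr B P le)
    (hpar : IsParent P P')
    (hsp : IsSplitter P le P' P₀ Sp) :
    IsRefineOf tm tr B P le P' P₀ Sp P le :=
  ⟨hprp, hprp.lhd_self, hst.stableWrt hprp (hpar.splitPart hsp), fun _ _ _ h _ => h⟩

/-- a stable partition-relation pair is a fixed point of the
refinement operator. -/
theorem stable_fixed_point (tm : S → Prop) (tr : S → A → S → Prop) (B : Set A)
    (P : Set (Set S)) (le : Set S → Set S → Prop)
    (P' : Set (Set S)) (P₀ Sp : Set S)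
    (hprp : IsPRP P le) (hst : IsStable tm tr B P le)
    (hpar : IsParent P P') (hne : P' ≠ P)
    (hsp : IsSplitter P le P' P₀ Sp) :
    IsRefineOf tm tr B P le P' P₀ Sp P le :=
  stable_fixed_point_general tm tr B P le P' P₀ Sp hprp hst hpar hsp
end

section
/- The refinement operator is monotone with respect to ◁: if (P₁, ≤₁) ◁ (P₂, ≤₂), P' is a parent partition of P₂, and S' is a splitter of P' with respect to P₂, then Refine(P₁, ≤₁, P', S') ◁ Refine(P₂, ≤₂, P', S'). -/
variable {S A : Type*}

theorem Lhd.trans {P₁ P₂ P₃ : Set (Set S)} {le₁ le₂ le₃ : Set S → Set S → Prop}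
    (h₁₂ : Lhd P₁ le₁ P₂ le₂) (h₂₃ : Lhd P₂ le₂ P₃ le₃) : Lhd P₁ le₁ P₃ le₃ := by
  intro Q R hQR
  obtain ⟨Q₂, hQ₂, R₂, hR₂, hQQ₂, hRR₂, hle₂⟩ := h₁₂ Q R hQR
  obtain ⟨Q₃, hQ₃, R₃, hR₃, hQ₂Q₃, hR₂R₃, hle₃⟩ := h₂₃ Q₂ R₂ hle₂
  exact ⟨Q₃, hQ₃, R₃, hR₃, hQQ₂.trans hQ₂Q₃, hRR₂.trans hR₂R₃, hle₃⟩

theorem refine_monotone_general (tm : S → Prop) (tr : S → A → S → Prop) (B : Set A)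
    (P₁ : Set (Set S)) (le₁ : Set S → Set S → Prop)
    (P₂ : Set (Set S)) (le₂ : Set S → Set S → Prop)
    (P' : Set (Set S)) (P₀ Sp : Set S)
    (Pr₁ : Set (Set S)) (ler₁ : Set S → Set S → Prop)
    (Pr₂ : Set (Set S)) (ler₂ : Set S → Set S → Prop)
    (hl : Lhd P₁ le₁ P₂ le₂)
    (hr₁ : IsRefineOf tm tr B P₁ le₁ P' P₀ Sp Pr₁ ler₁)
    (hr₂ : IsRefineOf tm tr B P₂ le₂ P' P₀ Sp Pr₂ ler₂) :
    Lhd Pr₁ ler₁ Pr₂ ler₂ := by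
  obtain ⟨hprp₁, hlhd₁, hstable₁, -⟩ := hr₁
  obtain ⟨-, -, -, coarsest₂⟩ := hr₂
  exact coarsest₂ Pr₁ ler₁ hprp₁ (hlhd₁.trans hl) hstable₁

/-- the refinement operator is ◁-monotone. -/
theorem refine_monotone (tm : S → Prop) (tr : S → A → S → Prop) (B : Set A)
    (P₁ : Set (Set S)) (le₁ : Set S → Set S → Prop)
    (P₂ : Set (Set S)) (le₂ : Set S → Set S → Prop)
    (P' : Set (Set S)) (P₀ Sp : Set S)
    (Pr₁ : Set (Set S)) (ler₁ : Set S → Set S → Prop)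
    (Pr₂ : Set (Set S)) (ler₂ : Set S → Set S → Prop)
    (h₁ : IsPRP P₁ le₁) (h₂ : IsPRP P₂ le₂)
    (hl : Lhd P₁ le₁ P₂ le₂)
    (hpar : IsParent P₂ P') (hsp : IsSplitter P₂ le₂ P' P₀ Sp)
    (hr₁ : IsRefineOf tm tr B P₁ le₁ P' P₀ Sp Pr₁ ler₁)
    (hr₂ : IsRefineOf tm tr B P₂ le₂ P' P₀ Sp Pr₂ ler₂) :
    Lhd Pr₁ ler₁ Pr₂ ler₂ :=
  refine_monotone_general tm tr B P₁ le₁ P₂ le₂ P' P₀ Sp Pr₁ ler₁ Pr₂ ler₂ hl hr₁ hr₂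
end

section
/- If P ≤ Q holds in the stable partition-relation pair induced by partial bisimilarity and some state of Q has an a-transition (a ∈ A) into class R, then every state of Q has an a-transition into bb(R); moreover if a ∈ B then every state of the little brother P has an a-transition into lb(R). (Instantiation of stability conditions c and d for the canonical pair.) -/
variable {S A : Type*}

/-! The canonical pair is stable because partial bisimilarity is itself a partial bisimulation:
a transition of one state of `Q` is matched, up to `≤_B`, by every state `≤_B`-above it (all of
`Q`), and, for `a ∈ B`, by every state `≤_B`-below it (all of `P`). A target that is `≤_B`-above
(below) a state of `R` lies in a class above (below) `R`. -/

section Preorder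

variable {r : S → S → Prop}

lemma self_mem_eqClass [Std.Refl r] (x : S) : x ∈ ({q | r x q ∧ r q x} : Set S) :=
  ⟨refl x, refl x⟩

lemma eqClass_mem_eqClasses_s19 (x : S) : {q | r x q ∧ r q x} ∈ eqClasses r :=
  ⟨x, rfl⟩

lemma rel_of_mem_eqClasses_s19 [IsTrans S r] {C : Set S} (hC : C ∈ eqClasses r) {x y : S}
    (hx : x ∈ C) (hy : y ∈ C) : r x y := by
  obtain ⟨z, rfl⟩ := hC
  exact _root_.trans hx.2 hy.1

lemma classLe.rel_s19 [IsTrans S r] {Q T : Set S} (h : classLe r Q T) {x y : S}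
    (hx : x ∈ Q) (hy : y ∈ T) : r x y := by
  obtain ⟨hQ, hT, x₀, hx₀, y₀, hy₀, h₀⟩ := h
  exact _root_.trans (rel_of_mem_eqClasses_s19 hQ hx hx₀)
    (_root_.trans h₀ (rel_of_mem_eqClasses_s19 hT hy₀ hy))

lemma mem_bigBro_of_rel_s19 [Std.Refl r] {R : Set S} (hR : R ∈ eqClasses r) {x y : S}
    (hx : x ∈ R) (hxy : r x y) : y ∈ bigBro (eqClasses r) (classLe r) R :=
  ⟨_, eqClass_mem_eqClasses_s19 y, ⟨hR, eqClass_mem_eqClasses_s19 y, x, hx, y, self_mem_eqClass y, hxy⟩,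
    self_mem_eqClass y⟩

lemma mem_litBro_of_rel_s19 [Std.Refl r] {R : Set S} (hR : R ∈ eqClasses r) {x y : S}
    (hx : x ∈ R) (hyx : r y x) : y ∈ litBro (eqClasses r) (classLe r) R :=
  ⟨_, eqClass_mem_eqClasses_s19 y, ⟨eqClass_mem_eqClasses_s19 y, hR, y, self_mem_eqClass y, x, hx, hyx⟩,
    self_mem_eqClass y⟩

end Preorder

section PartialBisimilarity

variable {tm : S → Prop} {tr : S → A → S → Prop} {B : Set A}

lemma isPB_eq : IsPB tm tr B (· = ·) := by
  rintro p q rfl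
  exact ⟨id, fun _ p' h => ⟨p', h, rfl⟩, fun _ q' _ h => ⟨q', h, rfl⟩⟩

lemma IsPB.comp {R₁ R₂ : S → S → Prop} (h₁ : IsPB tm tr B R₁) (h₂ : IsPB tm tr B R₂) :
    IsPB tm tr B (Relation.Comp R₁ R₂) := by
  rintro x z ⟨y, hxy, hyz⟩
  obtain ⟨tm₁, fwd₁, bwd₁⟩ := h₁ x y hxy
  obtain ⟨tm₂, fwd₂, bwd₂⟩ := h₂ y z hyz
  refine ⟨tm₂ ∘ tm₁, fun a x' hx' => ?_, fun b z' hb hz' => ?_⟩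
  · obtain ⟨y', hy', hxy'⟩ := fwd₁ a x' hx'
    obtain ⟨z', hz', hyz'⟩ := fwd₂ a y' hy'
    exact ⟨z', hz', y', hxy', hyz'⟩
  · obtain ⟨y', hy', hyz'⟩ := bwd₂ b z' hb hz'
    obtain ⟨x', hx', hxy'⟩ := bwd₁ b y' hb hy'
    exact ⟨x', hx', y', hxy', hyz'⟩

instance : IsPreorder S (PbLe tm tr B) where
  refl _ := ⟨_, isPB_eq, rfl⟩
  trans _ _ _ := fun ⟨_, h₁, hpq⟩ ⟨_, h₂, hqr⟩ => ⟨_, h₁.comp h₂, _, hpq, hqr⟩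

lemma PbLe.exists_tr {p q p' : S} {a : A} (h : PbLe tm tr B p q) (hp : tr p a p') :
    ∃ q', tr q a q' ∧ PbLe tm tr B p' q' := by
  obtain ⟨R, hR, hpq⟩ := h
  obtain ⟨q', hq, hpq'⟩ := (hR p q hpq).2.1 a p' hp
  exact ⟨q', hq, R, hR, hpq'⟩

lemma PbLe.exists_tr_of_mem {p q q' : S} {b : A} (h : PbLe tm tr B p q) (hb : b ∈ B)
    (hq : tr q b q') : ∃ p', tr p b p' ∧ PbLe tm tr B p' q' := by
  obtain ⟨R, hR, hpq⟩ := h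
  obtain ⟨p', hp, hpq'⟩ := (hR p q hpq).2.2 b q' hb hq
  exact ⟨p', hp, R, hR, hpq'⟩

end PartialBisimilarity

theorem canonical_stability_general (tm : S → Prop) (tr : S → A → S → Prop) (B : Set A)
    (P Q R : Set S) (a : A)
    (hR : R ∈ eqClasses (PbLe tm tr B))
    (hle : classLe (PbLe tm tr B) P Q)
    (hex : ExTr tr a Q R) :
    AllTr tr a Q (bigBro (eqClasses (PbLe tm tr B)) (classLe (PbLe tm tr B)) R) ∧
    (a ∈ B → AllTr tr a P (litBro (eqClasses (PbLe tm tr B)) (classLe (PbLe tm tr B)) R)) := by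
  obtain ⟨q₁, hq₁, r₁, hr₁, htr⟩ := hex
  have hQ : Q ∈ eqClasses (PbLe tm tr B) := hle.2.1
  refine ⟨fun q hq => ?_, fun hB p hp => ?_⟩
  · obtain ⟨x, hx, hr₁x⟩ := (rel_of_mem_eqClasses_s19 hQ hq₁ hq).exists_tr htr
    exact ⟨x, mem_bigBro_of_rel_s19 hR hr₁ hr₁x, hx⟩
  · obtain ⟨x, hx, hxr₁⟩ := (hle.rel_s19 hp hq₁).exists_tr_of_mem hB htr
    exact ⟨x, mem_litBro_of_rel_s19 hR hr₁ hxr₁, hx⟩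

/-- instantiation of stability conditions c and d for the canonical
partition-relation pair induced by partial bisimilarity. -/
theorem canonical_stability (tm : S → Prop) (tr : S → A → S → Prop) (B : Set A)
    (P Q R : Set S) (a : A)
    (hP : P ∈ eqClasses (PbLe tm tr B))
    (hQ : Q ∈ eqClasses (PbLe tm tr B))
    (hR : R ∈ eqClasses (PbLe tm tr B))
    (hle : classLe (PbLe tm tr B) P Q)
    (hex : ExTr tr a Q R) :
    AllTr tr a Q (bigBro (eqClasses (PbLe tm tr B)) (classLe (PbLe tm tr B)) R) ∧
    (a ∈ B → AllTr tr a P (litBro (eqClasses (PbLe tm tr B)) (classLe (PbLe tm tr B)) R)) :=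
  canonical_stability_general tm tr B P Q R a hR hle hex
end
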